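/- Let d, m, n be positive natural numbers with m ≤ n. Identify (ℂ^d)^{⊗n} with (ℂ^d)^{⊗m} ⊗ (ℂ^d)^{⊗(n−m)} by indexing with ((Fin m → Fin d) × (Fin (n−m) → Fin d)); let Π_sym^{n,d} be the symmetrizer over Equiv.Perm (Fin m ⊕ Fin (n−m)) and Π_sym^{m,d} the symmetrizer over Equiv.Perm (Fin m). Then the Werner cloning map is trace-preserving on the symmetric subspace: for every A : Matrix ((Fin m → Fin d)) ((Fin m → Fin d)) ℂ with Π_sym^{m,d} · A · Π_sym^{m,d} = A, one has (d[m] / d[n]) · trace(Π_sym^{n,d} · (A ⊗ₖ 1) · Π_sym^{n,d}) = trace A, where A ⊗ₖ 1 is the Kronecker product of A with the identity matrix on (Fin (n−m) → Fin d) and d[k] = (k + d − 1).choose k. -/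

import Mathlib

/-!
Since `A = Pₘ A Pₘ` and the symmetrizers are idempotent, the trace on the left equals
`tr (Tr₂ Pₙ · A)`, where `Tr₂` is the partial trace over the last `n - m` factors. The
`(a, b)` entry of `Tr₂ Pₙ` counts, over all colourings `c` of the extra `k = n - m` sites, the
permutations carrying `(a, c)` to `(b, c)`. Such a count is `∏ⱼ μⱼ!` over the colour
multiplicities `μ` when these agree, and `0` otherwise; summing over `c` gives
`#{τ | a ∘ τ = b} · (m + d)⁽ᵏ⁾` (rising factorial). Hence `Tr₂ Pₙ = (d[n] / d[m]) • Pₘ`,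
because `j! · d[j] = d⁽ʲ⁾`.
-/

open Matrix Kronecker

/-- The symmetrizer on `(ℂ^d)^{⊗m}`. -/
noncomputable def symmetrizer (d m : ℕ) :
    Matrix (Fin m → Fin d) (Fin m → Fin d) ℂ :=
  ((m.factorial : ℂ)⁻¹) • ∑ σ : Equiv.Perm (Fin m),
    Matrix.of fun a b => if a ∘ σ = b then (1 : ℂ) else 0

/-- The symmetrizer on `(ℂ^d)^{⊗m} ⊗ (ℂ^d)^{⊗k}`, with permutations of `Fin m ⊕ Fin k`
acting on the product index `(Fin m → Fin d) × (Fin k → Fin d)`. -/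
noncomputable def symmetrizerSplit (d m k : ℕ) :
    Matrix ((Fin m → Fin d) × (Fin k → Fin d)) ((Fin m → Fin d) × (Fin k → Fin d)) ℂ :=
  (((m + k).factorial : ℂ)⁻¹) • ∑ σ : Equiv.Perm (Fin m ⊕ Fin k),
    Matrix.of fun p q =>
      if Sum.elim p.1 p.2 ∘ σ = Sum.elim q.1 q.2 then (1 : ℂ) else 0

open Finset
open scoped Nat

section PermCount

variable {ι κ : Type*}

def permCompEqEquiv [DecidableEq κ] (f g : ι → κ) :
    {σ : Equiv.Perm ι // f ∘ σ = g} ≃ ∀ j : κ, ({x // g x = j} ≃ {x // f x = j}) where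
  toFun σ j :=
    { toFun x := ⟨σ.1 x.1, (congrFun σ.2 x.1).trans x.2⟩
      invFun y := ⟨σ.1.symm y.1, by
        obtain ⟨σ, rfl⟩ := σ; simpa using y.2⟩
      left_inv x := Subtype.ext (Equiv.symm_apply_apply _ _)
      right_inv y := Subtype.ext (Equiv.apply_symm_apply _ _) }
  invFun F :=
    ⟨(Equiv.sigmaFiberEquiv g).symm.trans
        ((Equiv.sigmaCongrRight F).trans (Equiv.sigmaFiberEquiv f)),
      funext fun x => (F (g x) ⟨x, rfl⟩).2⟩
  left_inv σ := rfl
  right_inv F := funext fun j => Equiv.ext fun ⟨x, hx⟩ => by subst hx; rfl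

variable [Fintype ι] [DecidableEq ι] [Fintype κ] [DecidableEq κ]

theorem card_perm_comp_eq (f g : ι → κ) :
    Fintype.card {σ : Equiv.Perm ι // f ∘ σ = g} =
      if ∀ j, Fintype.card {x // f x = j} = Fintype.card {x // g x = j}
      then ∏ j, (Fintype.card {x // f x = j})! else 0 := by
  rw [Fintype.card_congr (permCompEqEquiv f g), Fintype.card_pi]
  split_ifs with h
  · exact prod_congr rfl fun j _ => by
      rw [Fintype.card_equiv (Fintype.equivOfCardEq (h j).symm), h j]
  · obtain ⟨j, hj⟩ := not_forall.mp h
    refine prod_eq_zero (mem_univ j) (Fintype.card_eq_zero_iff.mpr ⟨fun e => hj ?_⟩)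
    exact (Fintype.card_congr e).symm

end PermCount

section FiberCount

variable {κ : Type*} [DecidableEq κ]

theorem sum_card_fiber {ι : Type*} [Fintype ι] [Fintype κ] (f : ι → κ) :
    ∑ j, Fintype.card {x // f x = j} = Fintype.card ι := by
  rw [← Fintype.card_sigma, Fintype.card_congr (Equiv.sigmaFiberEquiv f)]

theorem card_fiber_sumElim {α β : Type*} [Fintype α] [Fintype β] (a : α → κ) (c : β → κ)
    (j : κ) :
    Fintype.card {x // Sum.elim a c x = j} =
      Fintype.card {x // a x = j} + Fintype.card {x // c x = j} := by
  simp only [Fintype.card_subtype, card_filter, Fintype.sum_sum_type, Sum.elim_inl,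
    Sum.elim_inr]
  congr

theorem card_fiber_cons {k : ℕ} (i : κ) (c : Fin k → κ) (j : κ) :
    Fintype.card {x // (Fin.cons i c : Fin (k + 1) → κ) x = j} =
      (Pi.single i 1 : κ → ℕ) j + Fintype.card {x // c x = j} := by
  simp only [Fintype.card_subtype, card_filter, Fin.sum_univ_succ, Fin.cons_zero,
    Fin.cons_succ, Pi.single_apply, eq_comm (a := j)]

end FiberCount

section WeightedSum

variable {κ : Type*} [Fintype κ] [DecidableEq κ]

theorem prod_factorial_add_single (μ : κ → ℕ) (i : κ) :
    ∏ j, (μ j + (Pi.single i 1 : κ → ℕ) j)! = (μ i + 1) * ∏ j, (μ j)! := by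
  rw [Fintype.prod_eq_mul_prod_compl i, Fintype.prod_eq_mul_prod_compl i fun j => (μ j)!,
    Pi.single_eq_same, Nat.factorial_succ, mul_assoc]
  congr 2
  refine prod_congr rfl fun j hj => ?_
  rw [Pi.single_eq_of_ne (by simpa using hj), add_zero]

theorem sum_prod_factorial_add_card_fiber (k : ℕ) (μ : κ → ℕ) :
    ∑ c : Fin k → κ, ∏ j, (μ j + Fintype.card {x // c x = j})! =
      (∏ j, (μ j)!) * (∑ j, μ j + Fintype.card κ).ascFactorial k := by
  induction k generalizing μ with
  | zero => simp
  | succ k ih =>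
    have hstep (i : κ) :
        ∑ c : Fin k → κ, ∏ j, (μ j + Fintype.card {x // (Fin.cons i c : Fin (k + 1) → κ) x = j})!
          = (μ i + 1) * (∏ j, (μ j)!) * (∑ j, μ j + Fintype.card κ + 1).ascFactorial k := by
      simp only [card_fiber_cons, ← add_assoc]
      rw [ih fun j => μ j + (Pi.single i 1 : κ → ℕ) j, prod_factorial_add_single, sum_add_distrib,
        sum_pi_single', if_pos (mem_univ i)]
      ring_nf
    rw [← (Fin.consEquiv fun _ => κ).sum_comp, Fintype.sum_prod_type]
    simp only [Fin.consEquiv_apply, hstep, ← sum_mul, sum_add_distrib, sum_const, Finset.card_univ,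
      smul_eq_mul, mul_one]
    rw [Nat.ascFactorial_succ, ← Nat.succ_ascFactorial]
    ring

end WeightedSum

theorem sum_card_perm_sumElim_comp_eq {α κ : Type*} [Fintype α] [DecidableEq α] [Fintype κ]
    [DecidableEq κ] (a b : α → κ) (k : ℕ) :
    ∑ c : Fin k → κ,
        Fintype.card {σ : Equiv.Perm (α ⊕ Fin k) // Sum.elim a c ∘ σ = Sum.elim b c} =
      Fintype.card {τ : Equiv.Perm α // a ∘ τ = b} *
        (Fintype.card α + Fintype.card κ).ascFactorial k := by
  simp only [card_perm_comp_eq, card_fiber_sumElim, add_left_inj]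
  split_ifs with h
  · rw [sum_prod_factorial_add_card_fiber, sum_card_fiber]
  · simp

section Symmetrizer

variable (𝕜 : Type*) [Field 𝕜] {ι : Type*} (κ : Type*) [Fintype ι] [DecidableEq ι]
  [DecidableEq κ]

def permMatrixOn (σ : Equiv.Perm ι) : Matrix (ι → κ) (ι → κ) 𝕜 :=
  of fun a b => if a ∘ σ = b then 1 else 0

noncomputable def symmetrizerOn : Matrix (ι → κ) (ι → κ) 𝕜 :=
  ((Fintype.card ι)! : 𝕜)⁻¹ • ∑ σ : Equiv.Perm ι, permMatrixOn 𝕜 κ σ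

variable {𝕜 κ}

theorem symmetrizerOn_apply (a b : ι → κ) :
    symmetrizerOn 𝕜 κ a b =
      Fintype.card {σ : Equiv.Perm ι // a ∘ σ = b} / ((Fintype.card ι)! : 𝕜) := by
  simp [symmetrizerOn, permMatrixOn, Matrix.sum_apply, Fintype.card_subtype, div_eq_inv_mul]

variable [Fintype κ]

theorem permMatrixOn_mul (σ τ : Equiv.Perm ι) :
    permMatrixOn 𝕜 κ σ * permMatrixOn 𝕜 κ τ = permMatrixOn 𝕜 κ (σ * τ) := by
  ext a b
  simp only [permMatrixOn, mul_apply, of_apply, boole_mul, sum_ite_eq, mem_univ, if_true,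
    Equiv.Perm.coe_mul, Function.comp_assoc]
  congr

theorem symmetrizerOn_mul_self [CharZero 𝕜] :
    symmetrizerOn 𝕜 κ * symmetrizerOn 𝕜 κ = (symmetrizerOn 𝕜 κ : Matrix (ι → κ) _ _) := by
  have hsum : ∀ σ : Equiv.Perm ι,
      ∑ τ, permMatrixOn 𝕜 κ σ * permMatrixOn 𝕜 κ τ = ∑ τ, permMatrixOn 𝕜 κ τ := fun σ => by
    simp only [permMatrixOn_mul]
    exact Equiv.sum_comp (Equiv.mulLeft σ) _
  rw [symmetrizerOn, Matrix.smul_mul, Matrix.mul_smul, smul_smul, sum_mul_sum,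
    sum_congr rfl fun σ _ => hsum σ, sum_const, Finset.card_univ, Fintype.card_perm,
    ← Nat.cast_smul_eq_nsmul 𝕜, smul_smul]
  congr 1
  field_simp

end Symmetrizer

section PartialTrace

variable {R α β : Type*} [CommSemiring R] [Fintype α] [Fintype β]

def partialTraceRight (M : Matrix (α × β) (α × β) R) : Matrix α α R :=
  of fun a a' => ∑ b, M (a, b) (a', b)

theorem trace_mul_kronecker_one [DecidableEq β] (M : Matrix (α × β) (α × β) R)
    (A : Matrix α α R) :
    trace (M * (A ⊗ₖ (1 : Matrix β β R))) = trace (partialTraceRight M * A) := by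
  simp only [trace, Matrix.diag, mul_apply, partialTraceRight, of_apply, kroneckerMap_apply,
    one_apply, mul_ite, mul_one, mul_zero, Fintype.sum_prod_type, sum_ite_eq', mem_univ,
    if_true, sum_mul]
  exact sum_congr rfl fun _ _ => sum_comm

end PartialTrace

theorem choose_mul_factorial_mul_ascFactorial (d m k : ℕ) :
    (m + d - 1).choose m * m ! * (m + d).ascFactorial k =
      (m + k + d - 1).choose (m + k) * (m + k)! := by
  have h := Nat.ascFactorial_mul_ascFactorial d m k
  rw [Nat.ascFactorial_eq_factorial_mul_choose' d m,
    Nat.ascFactorial_eq_factorial_mul_choose' d (m + k),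
    add_comm d m, add_comm d (m + k)] at h
  linarith

theorem symmetrizer_eq_symmetrizerOn (d m : ℕ) :
    symmetrizer d m = symmetrizerOn ℂ (Fin d) (ι := Fin m) := by
  rw [symmetrizer, symmetrizerOn, Fintype.card_fin]
  rfl

theorem symmetrizer_mul_self (d m : ℕ) :
    symmetrizer d m * symmetrizer d m = symmetrizer d m := by
  rw [symmetrizer_eq_symmetrizerOn, symmetrizerOn_mul_self]

theorem symmetrizerSplit_eq_submatrix (d m k : ℕ) :
    symmetrizerSplit d m k =
      (symmetrizerOn ℂ (Fin d) (ι := Fin m ⊕ Fin k)).submatrix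
        (Equiv.sumArrowEquivProdArrow _ _ _).symm (Equiv.sumArrowEquivProdArrow _ _ _).symm := by
  ext p q
  simp only [symmetrizerSplit, symmetrizerOn, permMatrixOn, Matrix.smul_apply, Matrix.sum_apply,
    submatrix_apply, of_apply, Fintype.card_sum, Fintype.card_fin]
  rfl

theorem symmetrizerSplit_mul_self (d m k : ℕ) :
    symmetrizerSplit d m k * symmetrizerSplit d m k = symmetrizerSplit d m k := by
  rw [symmetrizerSplit_eq_submatrix, submatrix_mul_equiv, symmetrizerOn_mul_self]

theorem partialTraceRight_symmetrizerSplit (d m k : ℕ) :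
    partialTraceRight (symmetrizerSplit d m k) =
      ((m ! * (m + d).ascFactorial k : ℕ) / ((m + k)! : ℂ)) • symmetrizer d m := by
  ext a b
  simp only [partialTraceRight, of_apply, symmetrizerSplit_eq_submatrix, submatrix_apply,
    symmetrizerOn_apply, Matrix.smul_apply, symmetrizer_eq_symmetrizerOn, Fintype.card_sum,
    Fintype.card_fin, ← sum_div, Equiv.sumArrowEquivProdArrow, Equiv.coe_fn_symm_mk]
  rw [← Nat.cast_sum, sum_card_perm_sumElim_comp_eq, Fintype.card_fin, Fintype.card_fin]
  have hm : (m ! : ℂ) ≠ 0 := Nat.cast_ne_zero.mpr (Nat.factorial_ne_zero m)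
  rw [smul_eq_mul]
  push_cast
  field_simp

theorem werner_cloning_trace_preserving_on_symmetric_subspace_general
    (d m n : ℕ) (hd : 0 < d) (hmn : m ≤ n)
    (A : Matrix (Fin m → Fin d) (Fin m → Fin d) ℂ)
    (hA : symmetrizer d m * A * symmetrizer d m = A) :
    (((m + d - 1).choose m : ℂ) / ((n + d - 1).choose n : ℂ)) *
      Matrix.trace (symmetrizerSplit d m (n - m) *
        (A ⊗ₖ (1 : Matrix (Fin (n - m) → Fin d) (Fin (n - m) → Fin d) ℂ)) *
        symmetrizerSplit d m (n - m))
      = Matrix.trace A := by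
  obtain ⟨k, rfl⟩ := Nat.exists_eq_add_of_le hmn
  have hPA : symmetrizer d m * A = A := by
    conv_lhs => rw [← hA]
    rw [← mul_assoc, ← mul_assoc, symmetrizer_mul_self, hA]
  have hCn : ((m + k + d - 1).choose (m + k) : ℂ) ≠ 0 :=
    Nat.cast_ne_zero.mpr (Nat.choose_pos (by omega)).ne'
  rw [Nat.add_sub_cancel_left, trace_mul_cycle, symmetrizerSplit_mul_self,
    trace_mul_kronecker_one, partialTraceRight_symmetrizerSplit, smul_mul, trace_smul, hPA,
    smul_eq_mul, ← mul_assoc]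
  have hscalar : ((m + d - 1).choose m : ℂ) / (m + k + d - 1).choose (m + k) *
      ((m ! * (m + d).ascFactorial k : ℕ) / (m + k)!) = 1 := by
    have hfac : ((m + k)! : ℂ) ≠ 0 := Nat.cast_ne_zero.mpr (Nat.factorial_ne_zero _)
    rw [div_mul_div_comm, div_eq_one_iff_eq (mul_ne_zero hCn hfac), ← Nat.cast_mul,
      ← Nat.cast_mul, ← mul_assoc, choose_mul_factorial_mul_ascFactorial]
  rw [hscalar, one_mul]

theorem werner_cloning_trace_preserving_on_symmetric_subspace
    (d m n : ℕ) (hd : 0 < d) (hm : 0 < m) (hn : 0 < n) (hmn : m ≤ n)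
    (A : Matrix (Fin m → Fin d) (Fin m → Fin d) ℂ)
    (hA : symmetrizer d m * A * symmetrizer d m = A) :
    (((m + d - 1).choose m : ℂ) / ((n + d - 1).choose n : ℂ)) *
      Matrix.trace (symmetrizerSplit d m (n - m) *
        (A ⊗ₖ (1 : Matrix (Fin (n - m) → Fin d) (Fin (n - m) → Fin d) ℂ)) *
        symmetrizerSplit d m (n - m))
      = Matrix.trace A :=
  werner_cloning_trace_preserving_on_symmetric_subspace_general d m n hd hmn A hA
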